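/- arXiv:1306.3660 — 2 statements merged into one kernel-verified Lean document; each statement's English description precedes it below -/
import Mathlib

section
/- Let (R, σ) be a commutative difference ring containing C, and q ∈ C nonzero and not a root of unity. Suppose λ ∈ R satisfies q·σ(λ) = λ, and set θ^{(1)} = λ(σ − Id), θ^{(i)} = (1/[i]_q!)(θ^{(1)})^i for i ≥ 1, θ^{(0)} = Id. Then θ^{(i)} ∘ θ^{(j)} = binom(i+j, i)_q · θ^{(i+j)} for all i, j ≥ 0. -/
/-- `[n]_q = 1 + q + ⋯ + q^{n-1} = (qⁿ-1)/(q-1)` as a complex number. -/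
noncomputable def qIntC (q : ℂ) (n : ℕ) : ℂ := ∑ k ∈ Finset.range n, q ^ k

/-- `[n]_q! = [n]_q [n-1]_q ⋯ [1]_q`, with `[0]_q! = 1`. -/
noncomputable def qFactC (q : ℂ) (n : ℕ) : ℂ := ∏ k ∈ Finset.range n, qIntC q (k + 1)

/-- Let `(R, σ)` be a commutative difference ring containing `ℂ` and `q ∈ ℂ` nonzero and
not a root of unity. If `λ ∈ R` satisfies `q·σ(λ) = λ` and `θ⁽¹⁾ = λ(σ − Id)`,
`θ⁽ⁱ⁾ = (1/[i]_q!)(θ⁽¹⁾)^i`, `θ⁽⁰⁾ = Id`, then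
`θ⁽ⁱ⁾ ∘ θ⁽ʲ⁾ = binom(i+j, i)_q · θ⁽ⁱ⁺ʲ⁾` for all `i, j ≥ 0`. -/
theorem qskew_iterative_identity
    (R : Type*) [CommRing R] [Algebra ℂ R] (σ : R →ₐ[ℂ] R)
    (q : ℂ) (hq0 : q ≠ 0) (hq : ∀ n : ℕ, n ≠ 0 → q ^ n ≠ 1)
    (lam : R) (hlam : q • σ lam = lam)
    (θ : ℕ → R → R)
    (hθ : ∀ i a, θ i a = (qFactC q i)⁻¹ • (fun x => lam * (σ x - x))^[i] a) :
    ∀ i j : ℕ, ∀ a : R,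
      θ i (θ j a) = (qFactC q (i + j) / (qFactC q i * qFactC q j)) • θ (i + j) a := by
  have hqne : ∀ n : ℕ, qIntC q (n + 1) ≠ 0 := by
    intro n
    have hq1 : q ≠ 1 := by
      intro h; exact hq 1 one_ne_zero (by simp [h])
    have : qIntC q (n + 1) = (q ^ (n + 1) - 1) / (q - 1) := by
      rw [qIntC, geom_sum_eq hq1]
    rw [this]
    exact div_ne_zero (sub_ne_zero.mpr (hq (n + 1) (Nat.succ_ne_zero n))) (sub_ne_zero.mpr hq1)
  have hFne : ∀ n : ℕ, qFactC q n ≠ 0 := by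
    intro n
    exact Finset.prod_ne_zero_iff.mpr fun k _ => hqne k
  set T : R → R := fun x => lam * (σ x - x) with hT
  have hTsmul : ∀ (i : ℕ) (c : ℂ) (a : R), T^[i] (c • a) = c • T^[i] a := by
    intro i
    induction i with
    | zero => simp
    | succ n ih =>
      intro c a
      rw [Function.iterate_succ_apply', Function.iterate_succ_apply', ih]
      simp only [hT, map_smul]
      rw [← smul_sub, mul_smul_comm]
  intro i j a
  rw [hθ, hθ, hθ, hTsmul, ← Function.iterate_add_apply, smul_smul, smul_smul]
  congr 1
  rw [div_mul_eq_mul_div, mul_inv_cancel₀ (hFne _), one_div, mul_inv]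
end

section
/- Let (R, σ) be a difference C-algebra, q ∈ C nonzero, and on the twisted power series ring R[[X; σ]] define Θ^{(1)}(Σ_i X^i a_i) = Σ_i [i]_q X^{i−1} a_i, where [i]_q = 1 + q + ... + q^{i−1}. Then Θ^{(1)} satisfies the twisted Leibniz rule Θ^{(1)}(fg) = Σ(f)Θ^{(1)}(g) + Θ^{(1)}(f)g for all f, g ∈ R[[X; σ]], where Σ(Σ_i X^i a_i) = Σ_i X^i q^i σ(a_i). -/
/-!
The coefficient of `Xⁿ` in `Θ⁽¹⁾(fg)` is `[n+1]_q Σ_{i+j=n+1} σʲ(fᵢ) gⱼ`. Splitting each weight as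
`[i+j]_q = [i]_q + qⁱ [j]_q` separates this into two sums: the `[i]_q` part is the coefficient of
`Θ⁽¹⁾(f) g`, and the `qⁱ [j]_q` part is that of `Σ(f) Θ⁽¹⁾(g)` (using `σʲ⁺¹ = σʲ ∘ σ`). The
argument works for any weight `c` with `c (i + j) = c i + qⁱ c j`.
-/

/-- Multiplication of twisted power series `Σᵢ Xⁱ aᵢ` over `(R, σ)`, with commutation rule
`aX = Xσ(a)` (so `(Xⁱa)(Xʲb) = X^{i+j} σʲ(a) b`), written on coefficient sequences. -/
noncomputable def tmul {R : Type*} [Ring R] (σ : R →+* R) (f g : ℕ → R) : ℕ → R :=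
  fun n => ∑ p ∈ Finset.HasAntidiagonal.antidiagonal n, (σ ^ p.2) (f p.1) * g p.2

open Finset

theorem geom_sum_add {K : Type*} [Semiring K] (q : K) (a b : ℕ) :
    ∑ k ∈ range (a + b), q ^ k = ∑ k ∈ range a, q ^ k + q ^ a * ∑ k ∈ range b, q ^ k := by
  simp only [sum_range_add, mul_sum, pow_add]

section WeightedShift

variable {K R : Type*} [CommRing K] [Ring R] [Algebra K R]

def weightedShift (c : ℕ → K) (f : ℕ → R) : ℕ → R := fun i => c (i + 1) • f (i + 1)

theorem AlgHom.toRingHom_pow_apply_smul (σ : R →ₐ[K] R) (j : ℕ) (a : K) (x : R) :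
    ((σ : R →+* R) ^ j) (a • x) = a • ((σ : R →+* R) ^ j) x := by
  simpa only [RingHom.coe_pow, AlgHom.coe_toRingHom, AlgHom.coe_pow] using map_smul (σ ^ j) a x

variable (σ : R →ₐ[K] R) (c : ℕ → K)

theorem sum_antidiagonal_succ_smul_left (hc : c 0 = 0) (f g : ℕ → R) (n : ℕ) :
    ∑ p ∈ antidiagonal (n + 1), c p.1 • (((σ : R →+* R) ^ p.2) (f p.1) * g p.2) =
      tmul σ (weightedShift c f) g n := by
  simp only [Nat.sum_antidiagonal_succ, hc, zero_smul, zero_add, tmul, weightedShift,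
    AlgHom.toRingHom_pow_apply_smul, smul_mul_assoc]

theorem sum_antidiagonal_succ_smul_right (q : K) (hc : c 0 = 0) (f g : ℕ → R) (n : ℕ) :
    ∑ p ∈ antidiagonal (n + 1), (q ^ p.1 * c p.2) • (((σ : R →+* R) ^ p.2) (f p.1) * g p.2) =
      tmul σ (fun i => q ^ i • σ (f i)) (weightedShift c g) n := by
  simp only [Nat.sum_antidiagonal_succ', hc, mul_zero, zero_smul, zero_add, tmul, weightedShift,
    AlgHom.toRingHom_pow_apply_smul, pow_succ, RingHom.coe_mul, Function.comp_apply,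
    AlgHom.coe_toRingHom]
  refine sum_congr rfl fun p _ => ?_
  rw [mul_smul, smul_mul_assoc, mul_smul_comm]

theorem weightedShift_tmul (q : K) (hc : ∀ i j, c (i + j) = c i + q ^ i * c j) (f g : ℕ → R) :
    weightedShift c (tmul σ f g) =
      tmul σ (fun i => q ^ i • σ (f i)) (weightedShift c g) + tmul σ (weightedShift c f) g := by
  have hc0 : c 0 = 0 := by simpa using hc 0 0
  funext n
  calc weightedShift c (tmul σ f g) n
      = ∑ p ∈ antidiagonal (n + 1), (c p.1 + q ^ p.1 * c p.2) •
          (((σ : R →+* R) ^ p.2) (f p.1) * g p.2) := by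
        rw [weightedShift, tmul, smul_sum]
        refine sum_congr rfl fun p hp => ?_
        rw [← hc, mem_antidiagonal.mp hp]
    _ = _ := by
        simp only [add_smul, sum_add_distrib, sum_antidiagonal_succ_smul_left σ c hc0,
          sum_antidiagonal_succ_smul_right σ c q hc0, Pi.add_apply, add_comm]

end WeightedShift

theorem Theta_one_twisted_Leibniz_general
    (R : Type*) [Ring R] [Algebra ℂ R] (σ : R →ₐ[ℂ] R) (q : ℂ)
    (Sm Th : (ℕ → R) → (ℕ → R))
    (hSm : ∀ f n, Sm f n = q ^ n • σ (f n))
    (hTh : ∀ f n, Th f n = (∑ k ∈ Finset.range (n + 1), q ^ k) • f (n + 1)) :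
    ∀ f g : ℕ → R,
      Th (tmul (σ : R →+* R) f g) =
        tmul (σ : R →+* R) (Sm f) (Th g) + tmul (σ : R →+* R) (Th f) g := by
  have hSm' : Sm = fun f i => q ^ i • σ (f i) := by
    funext f i; exact hSm f i
  have hTh' : Th = weightedShift fun m => ∑ k ∈ range m, q ^ k := by
    funext f i; exact hTh f i
  intro f g
  rw [hSm', hTh']
  exact weightedShift_tmul σ _ q (geom_sum_add q) f g

/-- Let `(R, σ)` be a difference `ℂ`-algebra, `q ∈ ℂ` nonzero. On the twisted power
series ring `R[[X; σ]]`, the map `Θ⁽¹⁾(Σᵢ Xⁱ aᵢ) = Σᵢ [i]_q X^{i−1} aᵢ` (with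
`[i]_q = 1 + q + ⋯ + q^{i-1}`) satisfies the twisted Leibniz rule
`Θ⁽¹⁾(fg) = Σ(f)Θ⁽¹⁾(g) + Θ⁽¹⁾(f)g`, where `Σ(Σᵢ Xⁱ aᵢ) = Σᵢ Xⁱ qⁱ σ(aᵢ)`. -/
theorem Theta_one_twisted_Leibniz
    (R : Type*) [Ring R] [Algebra ℂ R] (σ : R →ₐ[ℂ] R) (q : ℂ) (hq : q ≠ 0)
    (Sm Th : (ℕ → R) → (ℕ → R))
    (hSm : ∀ f n, Sm f n = q ^ n • σ (f n))
    (hTh : ∀ f n, Th f n = (∑ k ∈ Finset.range (n + 1), q ^ k) • f (n + 1)) :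
    ∀ f g : ℕ → R,
      Th (tmul (σ : R →+* R) f g) =
        tmul (σ : R →+* R) (Sm f) (Th g) + tmul (σ : R →+* R) (Th f) g :=
  Theta_one_twisted_Leibniz_general R σ q Sm Th hSm hTh
end
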